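/- Let δ > 0, let (r_h)_{h≥1} be a nondecreasing sequence of nonnegative reals with r_h → ∞, and let (t_k)_{k≥1} be a nondecreasing sequence of nonnegative reals. Define i_m = n + m for some fixed n ≥ 0, suppose that for each m, with j_m = max{h : r_h ≤ t_{n+m}} (setting j_m = 0 if no such h exists), one has t_{n+m} ≥ max{r_{j_m}, (i_m − j_m − 1)δ} where i_m ≥ m. Then t_k → ∞ as k → ∞. -/
import Mathlib


theorem stmt_10 (δ : ℝ) (hδ : 0 < δ)
    (r t : ℕ → ℝ) (hr : Monotone r) (hrn : ∀ h, 0 ≤ r h)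
    (hrinf : Filter.Tendsto r Filter.atTop Filter.atTop)
    (ht : Monotone t) (htn : ∀ k, 0 ≤ t k)
    (n : ℕ) (j : ℕ → ℕ)
    (hj : ∀ m : ℕ, max (r (j m)) (((n : ℝ) + m - (j m : ℝ) - 1) * δ) ≤ t (n + m)) :
    Filter.Tendsto t Filter.atTop Filter.atTop := by
  rw [Filter.tendsto_atTop]
  intro M
  obtain ⟨H, hH⟩ := Filter.eventually_atTop.1 (Filter.tendsto_atTop.1 hrinf M)
  obtain ⟨m, hm⟩ := exists_nat_ge (M / δ + H + 1)
  have key : M ≤ t (n + m) := by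
    rcases le_or_gt H (j m) with hc | hc
    · exact (hH _ hc).trans ((le_max_left _ _).trans (hj m))
    · have hjm : (j m : ℝ) ≤ (H : ℝ) - 1 := by
        have : (j m : ℝ) + 1 ≤ (H : ℝ) := by exact_mod_cast hc
        linarith
      have h1 : M / δ ≤ (n : ℝ) + m - (j m : ℝ) - 1 := by
        have hn : (0 : ℝ) ≤ n := Nat.cast_nonneg n
        linarith
      have h2 : M ≤ ((n : ℝ) + m - (j m : ℝ) - 1) * δ := by
        have := mul_le_mul_of_nonneg_right h1 hδ.le
        rwa [div_mul_cancel₀ M hδ.ne'] at this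
      exact h2.trans ((le_max_right _ _).trans (hj m))
  exact Filter.eventually_atTop.2 ⟨n + m, fun k hk => key.trans (ht hk)⟩
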